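/- arXiv:1005.1145 — 8 statements merged into one kernel-verified Lean document; each statement's English description precedes it below -/
import Mathlib

section
/- The number of positive 3-braids of length k equals F_{k+3} - 1, where F denotes the Fibonacci sequence with F_0 = 0, F_1 = 1. -/
/-!
`1/(1 - t - t²)` is the generating function of `F_{n+1}`, and dividing by `1 - t` takes partial
sums, which add up to `F_{k+3} - 1`. Since the product `(1 - t)(1 - t - t²)` is invertible,
`B` must be this product of series.
-/

open PowerSeries

theorem Nat.fib_add_three_eq_sum_add_one (n : ℕ) :
    fib (n + 3) = ∑ i ∈ Finset.range (n + 1), fib (i + 1) + 1 := by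
  rw [fib_succ_eq_succ_sum, Finset.sum_range_succ', fib_zero, add_zero]

namespace PowerSeries

variable {R : Type*}

theorem coeff_mul_mk_one [Semiring R] (f : ℕ → R) (n : ℕ) :
    coeff n (mk f * mk 1) = ∑ i ∈ Finset.range (n + 1), f i := by
  simp [coeff_mul, Finset.Nat.sum_antidiagonal_eq_sum_range_succ_mk]

theorem one_sub_X_sub_X_sq_mul_mk_fib [Ring R] :
    (1 - X - X ^ 2 : R⟦X⟧) * mk (fun n => (Nat.fib (n + 1) : R)) = 1 := by
  rw [sub_mul, sub_mul, one_mul]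
  ext n
  rcases n with _ | _ | n
  · simp
  · simp [coeff_succ_X_mul, coeff_X_pow_mul']
  · simp [coeff_succ_X_mul, coeff_X_pow_mul', Nat.fib_add_two]

end PowerSeries

/-- The number of positive 3-braids of length `k` (the coefficient `b_k` of `t^k` in the
generating function `1/((1-t)(1-t-t²))` of positive 3-braids) equals `F_{k+3} - 1`. -/
theorem positive_three_braids_count (B : PowerSeries ℚ)
    (hB : ((1 - X) * (1 - X - X ^ 2)) * B = 1) :
    ∀ k : ℕ, coeff k B = (Nat.fib (k + 3) : ℚ) - 1 := by
  set F : ℚ⟦X⟧ := mk fun n => (Nat.fib (n + 1) : ℚ)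
  have hinv : ((1 - X) * (1 - X - X ^ 2)) * (F * mk 1) = 1 :=
    calc ((1 - X) * (1 - X - X ^ 2)) * (F * mk 1)
        = ((1 - X - X ^ 2) * F) * (mk 1 * (1 - X)) := by ring
      _ = 1 := by rw [one_sub_X_sub_X_sq_mul_mk_fib, mk_one_mul_one_sub_eq_one, one_mul]
  have hB_eq : B = F * mk 1 := left_inv_eq_right_inv (by rwa [mul_comm]) hinv
  intro k
  rw [hB_eq, coeff_mul_mk_one, eq_sub_iff_add_eq, Nat.fib_add_three_eq_sum_add_one]
  simp
end

section
/- The number of simple braids in SB_n equals F_{2n-1}, the (2n-1)-st Fibonacci number. -/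
/-- The braid relations on the free monoid over generators `x_0, …, x_{n-1}` (a braid group /
monoid on `n+1` strands has `n` generators): far-apart generators commute, and adjacent
generators satisfy `x_i x_{i+1} x_i = x_{i+1} x_i x_{i+1}`. -/
def braidRels (n : ℕ) : FreeMonoid (Fin n) → FreeMonoid (Fin n) → Prop := fun a b =>
  (∃ i j : Fin n, (i : ℕ) + 2 ≤ (j : ℕ) ∧
    a = FreeMonoid.of i * FreeMonoid.of j ∧ b = FreeMonoid.of j * FreeMonoid.of i) ∨
  (∃ i j : Fin n, (j : ℕ) = (i : ℕ) + 1 ∧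
    a = FreeMonoid.of i * FreeMonoid.of j * FreeMonoid.of i ∧
    b = FreeMonoid.of j * FreeMonoid.of i * FreeMonoid.of j)

/-- The positive braid monoid on `n` generators, as the quotient of the free monoid by the
congruence generated by the braid relations. -/
def BraidMonoid (n : ℕ) := (conGen (braidRels n)).Quotient

instance (n : ℕ) : Monoid (BraidMonoid n) := Con.monoid _

/-- The canonical projection from positive words to positive braids. -/
def brMk (n : ℕ) : FreeMonoid (Fin n) →* BraidMonoid n := Con.mk' _

/-- A positive braid is *simple* if it can be written as a positive word in which every
generator occurs at most once. -/
def IsSimple {n : ℕ} (β : BraidMonoid n) : Prop :=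
  ∃ w : List (Fin n), w.Nodup ∧ β = brMk n (FreeMonoid.ofList w)

/-!
A word using every generator at most once is determined, up to commuting far-apart generators,
by the generators it uses and, for each pair of adjacent generators it uses, by which of the two
comes first. Adding the generators `0, 1, …` one at a time, generator `k` is either omitted,
appended after everything written so far, or prepended before it; prepending differs from
appending only when `k - 1` is present. This yields normal forms, and with `a m` of them on `m`
generators, `b m` of which use the top generator, `a (m+1) = 2 a m + b m` and
`b (m+1) = a m + b m`, so `a m = F (2m+1)`. Distinct normal forms are distinct braids already in
the symmetric group, where `x_k` acts as the transposition `(k k+1)`: the placement of the top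
generator `m - 1` can be read off from where the permutation sends `m - 1` and `m`.
-/

open Equiv Finset

namespace SimpleBraid

inductive Placement
  | absent
  | append
  | prepend
  deriving DecidableEq

/-- The placements are listed top generator first: `p :: d` places generator `d.length` into the
word spelled by `d`. -/
def formWord : List Placement → List ℕ
  | [] => []
  | .absent :: d => formWord d
  | .append :: d => formWord d ++ [d.length]
  | .prepend :: d => d.length :: formWord d

def TopPlaced (d : List Placement) : Prop := ∃ p ∈ d.head?, p ≠ .absent

instance : DecidablePred TopPlaced := fun d => inferInstanceAs (Decidable (∃ p ∈ d.head?, _))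

@[simp] lemma topPlaced_cons {p : Placement} {d : List Placement} :
    TopPlaced (p :: d) ↔ p ≠ .absent := by
  simp [TopPlaced]

/-- Prepending is only allowed after a generator that is present: otherwise the new generator
commutes with the whole word and prepending gives the same braid as appending. -/
def normalForms : ℕ → Finset (List Placement)
  | 0 => {[]}
  | m + 1 => (normalForms m).image (.absent :: ·) ∪ (normalForms m).image (.append :: ·) ∪
      {d ∈ normalForms m | TopPlaced d}.image (.prepend :: ·)

lemma mem_normalForms_succ {m : ℕ} {c : List Placement} :
    c ∈ normalForms (m + 1) ↔
      ∃ p d, c = p :: d ∧ d ∈ normalForms m ∧ (p = .prepend → TopPlaced d) := by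
  simp only [normalForms, mem_union, mem_image, mem_filter]
  constructor
  · rintro ((⟨d, hd, rfl⟩ | ⟨d, hd, rfl⟩) | ⟨d, ⟨hd, hdt⟩, rfl⟩)
    · exact ⟨_, d, rfl, hd, by simp⟩
    · exact ⟨_, d, rfl, hd, by simp⟩
    · exact ⟨_, d, rfl, hd, fun _ => hdt⟩
  · rintro ⟨p, d, rfl, hd, hp⟩
    cases p
    · exact .inl (.inl ⟨d, hd, rfl⟩)
    · exact .inl (.inr ⟨d, hd, rfl⟩)
    · exact .inr ⟨d, ⟨hd, hp rfl⟩, rfl⟩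

lemma length_of_mem_normalForms {m : ℕ} {c : List Placement} (hc : c ∈ normalForms m) :
    c.length = m := by
  induction m generalizing c with
  | zero => simpa [normalForms] using hc
  | succ m ih =>
    obtain ⟨p, d, rfl, hd, -⟩ := mem_normalForms_succ.1 hc
    simp [ih hd]

lemma lt_length_of_mem_formWord {c : List Placement} {x : ℕ} (hx : x ∈ formWord c) :
    x < c.length := by
  induction c with
  | nil => simp [formWord] at hx
  | cons p d ih =>
    cases p <;> simp only [formWord, List.mem_append, List.mem_cons] at hx <;> grind

lemma nodup_formWord (c : List Placement) : (formWord c).Nodup := by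
  induction c with
  | nil => simp [formWord]
  | cons p d ih =>
    have hd : d.length ∉ formWord d := fun h => (lt_length_of_mem_formWord h).false
    cases p
    · exact ih
    · exact ih.append (List.nodup_singleton _) (by simpa using hd)
    · exact ih.cons hd

lemma topPlaced_of_mem_formWord {c : List Placement} {k : ℕ} (hc : c.length = k + 1)
    (hk : k ∈ formWord c) : TopPlaced c := by
  obtain _ | ⟨p, d⟩ := c
  · simp at hc
  · rw [topPlaced_cons]
    rintro rfl
    simp only [List.length_cons, add_left_inj] at hc
    exact (lt_length_of_mem_formWord (c := d) hk).ne hc.symm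

section Counting

lemma card_image_cons {α : Type*} [DecidableEq α] (a : α) (s : Finset (List α)) :
    #(s.image (a :: ·)) = #s :=
  card_image_of_injective _ List.cons_injective

lemma disjoint_image_cons {α : Type*} [DecidableEq α] {a b : α} (h : a ≠ b)
    (s t : Finset (List α)) : Disjoint (s.image (a :: ·)) (t.image (b :: ·)) := by
  simp only [disjoint_left, mem_image]
  rintro _ ⟨d, -, rfl⟩ ⟨d', -, hd'⟩
  exact h (List.cons_eq_cons.1 hd').1.symm

lemma card_normalForms_succ (m : ℕ) :
    #(normalForms (m + 1)) = 2 * #(normalForms m) + #{d ∈ normalForms m | TopPlaced d} ∧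
      #{d ∈ normalForms (m + 1) | TopPlaced d} =
        #(normalForms m) + #{d ∈ normalForms m | TopPlaced d} := by
  have hAbsApp := disjoint_image_cons (a := Placement.absent) (b := Placement.append) (by decide)
    (normalForms m) (normalForms m)
  have hAbsPre := disjoint_image_cons (a := Placement.absent) (b := Placement.prepend) (by decide)
    (normalForms m) {d ∈ normalForms m | TopPlaced d}
  have hAppPre := disjoint_image_cons (a := Placement.append) (b := Placement.prepend) (by decide)
    (normalForms m) {d ∈ normalForms m | TopPlaced d}
  constructor
  · rw [normalForms, card_union_of_disjoint (disjoint_union_left.2 ⟨hAbsPre, hAppPre⟩),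
      card_union_of_disjoint hAbsApp, card_image_cons, card_image_cons, card_image_cons]
    ring
  · rw [normalForms, filter_union, filter_union, filter_image, filter_image, filter_image]
    simp only [topPlaced_cons, ne_eq, not_true_eq_false, filter_false, image_empty,
      reduceCtorEq, not_false_eq_true, filter_true, empty_union]
    rw [card_union_of_disjoint hAppPre, card_image_cons, card_image_cons]

lemma card_normalForms (m : ℕ) :
    #(normalForms m) = Nat.fib (2 * m + 1) ∧
      #{d ∈ normalForms m | TopPlaced d} = Nat.fib (2 * m) := by
  induction m with
  | zero => decide
  | succ m ih =>
    rw [(card_normalForms_succ m).1, (card_normalForms_succ m).2, ih.1, ih.2,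
      show 2 * (m + 1) = 2 * m + 1 + 1 by ring, Nat.fib_add_two, Nat.fib_add_two]
    constructor <;> ring

end Counting

section Existence

variable {G : Type*} [Monoid G]

lemma commute_prod_map (g : ℕ → G) (hg : ∀ i j, i + 2 ≤ j → Commute (g i) (g j))
    {l : List ℕ} {m : ℕ} (hl : ∀ x ∈ l, x + 2 ≤ m) :
    Commute (l.map g).prod (g m) :=
  Commute.list_prod_left _ _ fun _ hy => by
    obtain ⟨x, hx, rfl⟩ := List.mem_map.1 hy
    exact hg x m (hl x hx)

lemma exists_mem_normalForms_succ_perm_prod_eq (g : ℕ → G)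
    (hg : ∀ i j, i + 2 ≤ j → Commute (g i) (g j)) {m : ℕ} {d : List Placement}
    (hd : d ∈ normalForms m) {u v : List ℕ} (huv : (u ++ v).Nodup)
    (hlt : ∀ x ∈ u ++ v, x < m) (hperm : (formWord d).Perm (u ++ v))
    (hprod : ((formWord d).map g).prod = ((u ++ v).map g).prod) :
    ∃ c ∈ normalForms (m + 1), (formWord c).Perm (u ++ m :: v) ∧
      ((formWord c).map g).prod = ((u ++ m :: v).map g).prod := by
  have hlen := length_of_mem_normalForms hd
  by_cases hv : m - 1 ∈ v
  · have hu : ∀ x ∈ u, x + 2 ≤ m := fun x hx => by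
      have := hlt x (List.mem_append_left v hx)
      have := List.disjoint_of_nodup_append huv hx
      grind
    have htop : TopPlaced d := by
      have := hlt _ (List.mem_append_right u hv)
      exact topPlaced_of_mem_formWord (k := m - 1) (by omega) (hperm.mem_iff.2 (by simp [hv]))
    refine ⟨.prepend :: d, mem_normalForms_succ.2 ⟨_, d, rfl, hd, fun _ => htop⟩, ?_, ?_⟩
    · simpa [formWord, hlen] using (hperm.cons m).trans List.perm_middle.symm
    · simp only [formWord, hlen, List.map_cons, List.prod_cons, hprod, List.map_append,
        List.prod_append, ← mul_assoc, (commute_prod_map g hg hu).eq]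
  · have hv' : ∀ x ∈ v, x + 2 ≤ m := fun x hx => by
      have := hlt x (List.mem_append_right u hx)
      grind
    refine ⟨.append :: d, mem_normalForms_succ.2 ⟨_, d, rfl, hd, by simp⟩, ?_, ?_⟩
    · simpa [formWord, hlen] using (hperm.append_right [m]).trans
        ((List.perm_append_singleton m _).trans List.perm_middle.symm)
    · simp only [formWord, hlen, List.map_append, List.prod_append, hprod, List.map_cons,
        List.prod_cons, List.map_nil, List.prod_nil, mul_one, mul_assoc,
        (commute_prod_map g hg hv').eq]

theorem exists_mem_normalForms_perm_prod_eq (g : ℕ → G)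
    (hg : ∀ i j, i + 2 ≤ j → Commute (g i) (g j)) {m : ℕ} {w : List ℕ} (hw : w.Nodup)
    (hlt : ∀ x ∈ w, x < m) :
    ∃ c ∈ normalForms m, (formWord c).Perm w ∧
      ((formWord c).map g).prod = (w.map g).prod := by
  induction m generalizing w with
  | zero =>
    obtain rfl : w = [] := List.eq_nil_iff_forall_not_mem.2 fun x hx => Nat.not_lt_zero x (hlt x hx)
    exact ⟨[], by simp [normalForms], by simp [formWord]⟩
  | succ m ih =>
    by_cases hm : m ∈ w
    · obtain ⟨u, v, rfl⟩ := List.append_of_mem hm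
      obtain ⟨hmuv, huv⟩ := List.nodup_cons.1 (List.nodup_middle.1 hw)
      have hlt' : ∀ x ∈ u ++ v, x < m := fun x hx => by
        have := hlt x (List.perm_middle.symm.subset (List.mem_cons_of_mem m hx))
        have := ne_of_mem_of_not_mem hx hmuv
        omega
      obtain ⟨d, hd, hperm, hprod⟩ := ih huv hlt'
      exact exists_mem_normalForms_succ_perm_prod_eq g hg hd huv hlt' hperm hprod
    · obtain ⟨d, hd, hperm, hprod⟩ := ih hw fun x hx => by
        have := hlt x hx
        have := ne_of_mem_of_not_mem hx hm
        omega
      exact ⟨.absent :: d, mem_normalForms_succ.2 ⟨_, d, rfl, hd, by simp⟩, hperm, hprod⟩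

end Existence

section Permutations

def wordPerm (w : List ℕ) : Perm ℕ := (w.map fun k => swap k (k + 1)).prod

lemma wordPerm_apply_of_lt {w : List ℕ} {j : ℕ} (h : ∀ x ∈ w, x + 1 < j) :
    wordPerm w j = j := by
  induction w with
  | nil => rfl
  | cons a w ih =>
    have ha := h a (by simp)
    simp only [wordPerm, List.map_cons, List.prod_cons, Perm.mul_apply] at ih ⊢
    rw [ih fun x hx => h x (by simp [hx]), swap_apply_of_ne_of_ne (by omega) (by omega)]

@[simp] lemma wordPerm_formWord_absent (d : List Placement) :
    wordPerm (formWord (.absent :: d)) = wordPerm (formWord d) := rfl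

@[simp] lemma wordPerm_formWord_append (d : List Placement) :
    wordPerm (formWord (.append :: d)) = wordPerm (formWord d) * swap d.length (d.length + 1) := by
  simp [wordPerm, formWord]

@[simp] lemma wordPerm_formWord_prepend (d : List Placement) :
    wordPerm (formWord (.prepend :: d)) = swap d.length (d.length + 1) * wordPerm (formWord d) := by
  simp [wordPerm, formWord]

lemma wordPerm_formWord_apply_of_length_lt (c : List Placement) {j : ℕ} (hj : c.length < j) :
    wordPerm (formWord c) j = j :=
  wordPerm_apply_of_lt fun _ hx => by have := lt_length_of_mem_formWord hx; omega

lemma wordPerm_formWord_apply_length_ne_succ (d : List Placement) :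
    wordPerm (formWord d) d.length ≠ d.length + 1 := fun h =>
  d.length.succ_ne_self <| ((wordPerm (formWord d)).injective <|
    h.trans (wordPerm_formWord_apply_of_length_lt d d.length.lt_succ_self).symm).symm

lemma wordPerm_formWord_apply_length_ne {d : List Placement} (h : TopPlaced d) :
    wordPerm (formWord d) d.length ≠ d.length := by
  obtain _ | ⟨q, d⟩ := d
  · simp [TopPlaced] at h
  cases q
  · simp at h
  · simpa using wordPerm_formWord_apply_length_ne_succ d
  · simp [wordPerm_formWord_apply_of_length_lt d d.length.lt_succ_self]

def readPlacement (π : Perm ℕ) (m : ℕ) : Placement :=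
  if π (m + 1) = m + 1 then .absent else if π m = m + 1 then .append else .prepend

lemma readPlacement_wordPerm_formWord {p : Placement} {d : List Placement}
    (h : p = .prepend → TopPlaced d) :
    readPlacement (wordPerm (formWord (p :: d))) d.length = p := by
  have hfix := wordPerm_formWord_apply_of_length_lt d d.length.lt_succ_self
  have hne := wordPerm_formWord_apply_length_ne_succ d
  cases p
  · simp [readPlacement, hfix]
  · simp [readPlacement, hfix, hne]
  · have htop := wordPerm_formWord_apply_length_ne (h rfl)
    simp [readPlacement, hfix, hne, swap_apply_of_ne_of_ne htop hne]

lemma injOn_wordPerm_formWord (m : ℕ) :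
    Set.InjOn (fun c => wordPerm (formWord c)) (normalForms m) := by
  induction m with
  | zero =>
    intro c hc c' hc' _
    simp_all [normalForms]
  | succ m ih =>
    intro c hc c' hc' h
    obtain ⟨p, d, rfl, hd, hp⟩ := mem_normalForms_succ.1 hc
    obtain ⟨p', d', rfl, hd', hp'⟩ := mem_normalForms_succ.1 hc'
    have hlen : d.length = d'.length := by
      rw [length_of_mem_normalForms hd, length_of_mem_normalForms hd']
    obtain rfl : p = p' := by
      rw [← readPlacement_wordPerm_formWord hp, ← readPlacement_wordPerm_formWord hp']
      simp only at h
      rw [h, hlen]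
    have : wordPerm (formWord d) = wordPerm (formWord d') := by
      cases p <;> simpa [hlen] using h
    rw [ih hd hd' this]

end Permutations

section Braids

def gen (M k : ℕ) : BraidMonoid M := if h : k < M then brMk M (FreeMonoid.of ⟨k, h⟩) else 1

lemma gen_commute {M i j : ℕ} (h : i + 2 ≤ j) : Commute (gen M i) (gen M j) := by
  by_cases hj : j < M
  · simp only [gen, dif_pos hj, dif_pos (show i < M by omega), Commute, SemiconjBy, ← map_mul]
    exact (Con.eq _).2 <| ConGen.Rel.of _ _ <|
      .inl ⟨⟨i, by omega⟩, ⟨j, hj⟩, h, rfl, rfl⟩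
  · simp [gen, hj]

lemma brMk_ofList {M : ℕ} (w : List (Fin M)) :
    brMk M (FreeMonoid.ofList w) = ((w.map Fin.val).map (gen M)).prod := by
  induction w with
  | nil => simp
  | cons a w ih => simp [FreeMonoid.ofList_cons, ih, gen]

lemma isSimple_iff {M : ℕ} {β : BraidMonoid M} :
    IsSimple β ↔
      ∃ w : List ℕ, w.Nodup ∧ (∀ x ∈ w, x < M) ∧ β = (w.map (gen M)).prod := by
  constructor
  · rintro ⟨w, hw, rfl⟩
    exact ⟨w.map Fin.val, hw.map Fin.val_injective, by simp, brMk_ofList w⟩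
  · rintro ⟨w, hw, hlt, rfl⟩
    lift w to List (Fin M) using hlt
    exact ⟨w, hw.of_map _, (brMk_ofList w).symm⟩

lemma commute_swap_swap_of_add_two_le {i j : ℕ} (h : i + 2 ≤ j) :
    Commute (swap i (i + 1)) (swap j (j + 1)) :=
  (Perm.disjoint_swap_swap (by simp; omega)).commute

lemma swap_succ_braid (i : ℕ) :
    swap i (i + 1) * swap (i + 1) (i + 2) * swap i (i + 1) =
      swap (i + 1) (i + 2) * swap i (i + 1) * swap (i + 1) (i + 2) := by
  have h₁ : swap (i + 1) i * swap (i + 2) (i + 1) * swap (i + 1) i = swap i (i + 2) :=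
    swap_mul_swap_mul_swap (by omega) (by omega)
  have h₂ : swap (i + 1) (i + 2) * swap i (i + 1) * swap (i + 1) (i + 2) = swap (i + 2) i :=
    swap_mul_swap_mul_swap (by omega) (by omega)
  rw [h₂, swap_comm (i + 2), ← h₁, swap_comm (i + 1) i, swap_comm (i + 2)]

def braidPerm (M : ℕ) : BraidMonoid M →* Perm ℕ :=
  Con.lift _ (FreeMonoid.lift fun i => swap (i : ℕ) (i + 1)) <| Con.conGen_le.2 <| by
    rintro _ _ (⟨i, j, hij, rfl, rfl⟩ | ⟨i, j, hij, rfl, rfl⟩) <;>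
      simp only [Con.ker_rel, map_mul, FreeMonoid.lift_eval_of]
    · exact commute_swap_swap_of_add_two_le hij
    · rw [hij]
      exact swap_succ_braid i

lemma braidPerm_brMk_of {M : ℕ} (i : Fin M) :
    braidPerm M (brMk M (FreeMonoid.of i)) = swap (i : ℕ) (i + 1) :=
  (Con.lift_mk' _ _).trans (FreeMonoid.lift_eval_of _ _)

lemma braidPerm_prod_gen {M : ℕ} {w : List ℕ} (hw : ∀ x ∈ w, x < M) :
    braidPerm M (w.map (gen M)).prod = wordPerm w := by
  rw [map_list_prod, List.map_map, wordPerm]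
  congr 1
  refine List.map_congr_left fun x hx => ?_
  simp [gen, hw x hx, braidPerm_brMk_of]

lemma setOf_isSimple_eq_image (M : ℕ) :
    {β : BraidMonoid M | IsSimple β} =
      (fun c => ((formWord c).map (gen M)).prod) '' normalForms M := by
  ext β
  simp only [Set.mem_ofPred_eq, isSimple_iff, Set.mem_image, mem_coe]
  constructor
  · rintro ⟨w, hw, hlt, rfl⟩
    obtain ⟨c, hc, -, hprod⟩ :=
      exists_mem_normalForms_perm_prod_eq (gen M) (fun _ _ => gen_commute) hw hlt
    exact ⟨c, hc, hprod⟩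
  · rintro ⟨c, hc, rfl⟩
    refine ⟨formWord c, nodup_formWord c, fun x hx => ?_, rfl⟩
    simpa [length_of_mem_normalForms hc] using lt_length_of_mem_formWord hx

lemma injOn_prod_gen_formWord (M : ℕ) :
    Set.InjOn (fun c => ((formWord c).map (gen M)).prod) (normalForms M) := by
  intro c hc c' hc' h
  have hlt : ∀ {c}, c ∈ normalForms M → ∀ x ∈ formWord c, x < M := fun hc x hx =>
    length_of_mem_normalForms hc ▸ lt_length_of_mem_formWord hx
  refine injOn_wordPerm_formWord M hc hc' ?_
  simpa only [braidPerm_prod_gen (hlt hc), braidPerm_prod_gen (hlt hc')] using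
    congrArg (braidPerm M) h

end Braids

end SimpleBraid

open SimpleBraid in
/-- The number of simple braids in `SB_n` (positive `n`-strand braids, on generators
`x_1, …, x_{n-1}`, containing each generator at most once) is the Fibonacci number
`F_{2n-1}` (with `F_0 = 0`, `F_1 = F_2 = 1`). -/
theorem card_simple_braids (n : ℕ) (hn : 1 ≤ n) :
    {β : BraidMonoid (n - 1) | IsSimple β}.ncard = Nat.fib (2 * n - 1) := by
  rw [setOf_isSimple_eq_image, (injOn_prod_gen_formWord _).ncard_image, Set.ncard_coe_finset,
    (card_normalForms _).1]
  congr 1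
  omega
end

section
/- Define s_{n,i} by s_{n,0} = 1, s_{n,i} = 0 for i ≥ n, and s_{n,i} = s_{n-1,i} + s_{n-1,i-1} + s_{n-2,i-2} + ··· + s_{n-i,0}. Then s_{n,i} also satisfies s_{n,i} = 2 s_{n-1,i-1} + s_{n-1,i} - s_{n-2,i-1} for n ≥ 3 and i ≥ 1. -/
/-- If `s n i` is the number of simple `n`-braids of length `i` — characterized by
`s_{n,0} = 1`, `s_{n,i} = 0` for `i ≥ n`, and the long recurrence
`s_{n,i} = s_{n-1,i} + s_{n-1,i-1} + s_{n-2,i-2} + ⋯ + s_{n-i,0}` — then it also satisfies the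
short recurrence `s_{n,i} = 2 s_{n-1,i-1} + s_{n-1,i} - s_{n-2,i-1}` (for `n ≥ 3`, `1 ≤ i`,
within the triangle `i < n`). -/
theorem simple_braid_short_recurrence (s : ℕ → ℕ → ℚ)
    (h0 : ∀ n, 1 ≤ n → s n 0 = 1)
    (hz : ∀ n i, n ≤ i → s n i = 0)
    (hrec : ∀ n i, 1 ≤ i → i < n →
      s n i = s (n - 1) i + ∑ j ∈ Finset.Icc 1 i, s (n - j) (i - j)) :
    ∀ n i, 3 ≤ n → 1 ≤ i → i < n →
      s n i = 2 * s (n - 1) (i - 1) + s (n - 1) i - s (n - 2) (i - 1) := by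
  intro n i hn hi hlt
  rcases eq_or_lt_of_le hi with h1 | h2
  · -- i = 1
    subst h1
    have h := hrec n 1 le_rfl hlt
    simp [Finset.Icc_self] at h
    rw [h, h0 (n - 1) (by omega), h0 (n - 2) (by omega)]
    ring
  · -- i ≥ 2
    have h := hrec n i hi hlt
    have h' := hrec (n - 1) (i - 1) (by omega) (by omega)
    rw [← Finset.Ico_add_one_right_eq_Icc, Finset.sum_Ico_eq_sum_range] at h h'
    have e1 : i + 1 - 1 = (i - 1) + 1 := by omega
    rw [e1, Finset.sum_range_succ'] at h
    have e2 : (∑ k ∈ Finset.range (i - 1), s (n - (1 + (k + 1))) (i - (1 + (k + 1))))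
        = ∑ k ∈ Finset.range (i - 1), s (n - 1 - (1 + k)) (i - 1 - (1 + k)) := by
      apply Finset.sum_congr rfl
      intro k _
      congr 1 <;> omega
    have e3 : (i - 1) + 1 - 1 = i - 1 := by omega
    rw [e3] at h'
    have e4 : n - 1 - 1 = n - 2 := by omega
    rw [e4] at h'
    have e5 : n - (1 + 0) = n - 1 := by omega
    have e6 : i - (1 + 0) = i - 1 := by omega
    rw [e2, e5, e6] at h
    rw [h]
    have : (∑ k ∈ Finset.range (i - 1), s (n - 1 - (1 + k)) (i - 1 - (1 + k)))
        = s (n - 1) (i - 1) - s (n - 2) (i - 1) := by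
      rw [h']; ring
    rw [this]; ring
end

section
/- With s_{n,i} as above, the top coefficient satisfies s_{n,n-1} = 2^{n-2} for all n ≥ 2. -/
/-!
Peeling off the term `j = 1` of the recurrence for `s_{n+1,n}` leaves `s_{n,n-1}` plus a sum that,
after shifting `j`, is the recurrence for `s_{n,n-1}` itself (the diagonal terms `s_{n,n}` and
`s_{n-1,n-1}` vanish). Hence `s_{n+1,n} = 2 s_{n,n-1}`, and `s_{2,1} = s_{1,0} = 1` starts the
doubling.
-/

open Finset

theorem sum_Icc_one_succ_sub_sub {M : Type*} [AddCommMonoid M] (f : ℕ → ℕ → M) (n i : ℕ) :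
    ∑ j ∈ Icc 1 (i + 1), f (n + 1 - j) (i + 1 - j) = f n i + ∑ j ∈ Icc 1 i, f (n - j) (i - j) := by
  rw [← Ico_add_one_right_eq_Icc, sum_eq_sum_Ico_succ_bot (by omega), ← Ico_add_one_right_eq_Icc,
    ← sum_Ico_add']
  simp

theorem top_succ_eq_two_mul {M : Type*} [AddCommMonoid M] {s : ℕ → ℕ → M}
    (hz : ∀ n i, n ≤ i → s n i = 0)
    (hrec : ∀ n i, 1 ≤ i → i < n →
      s n i = s (n - 1) i + ∑ j ∈ Icc 1 i, s (n - j) (i - j))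
    {k : ℕ} (hk : 1 ≤ k) :
    s (k + 2) (k + 1) = 2 • s (k + 1) k := by
  have hprev : s (k + 1) k = ∑ j ∈ Icc 1 k, s (k + 1 - j) (k - j) := by
    rw [hrec (k + 1) k hk (by omega), Nat.add_sub_cancel, hz k k le_rfl, zero_add]
  rw [hrec (k + 2) (k + 1) (by omega) (by omega), show k + 2 = k + 1 + 1 from rfl,
    Nat.add_sub_cancel, hz _ _ le_rfl, zero_add,
    sum_Icc_one_succ_sub_sub, ← hprev, two_nsmul]

/-- With `s n i` the number of simple `n`-braids of length `i` (satisfying `s_{n,0} = 1`,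
`s_{n,i} = 0` for `i ≥ n`, and `s_{n,i} = s_{n-1,i} + Σ_{j=1}^{i} s_{n-j,i-j}`), the last
nonzero coefficient is `s_{n,n-1} = 2^{n-2}` for all `n ≥ 2`. -/
theorem simple_braid_top_coefficient (s : ℕ → ℕ → ℚ)
    (h0 : ∀ n, 1 ≤ n → s n 0 = 1)
    (hz : ∀ n i, n ≤ i → s n i = 0)
    (hrec : ∀ n i, 1 ≤ i → i < n →
      s n i = s (n - 1) i + ∑ j ∈ Finset.Icc 1 i, s (n - j) (i - j)) :
    ∀ n : ℕ, 2 ≤ n → s n (n - 1) = (2 : ℚ) ^ (n - 2) := by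
  suffices h : ∀ k, s (k + 2) (k + 1) = 2 ^ k by
    intro n hn
    obtain ⟨k, rfl⟩ := Nat.exists_eq_add_of_le' hn
    simpa using h k
  intro k
  induction k with
  | zero => simpa [hz 1 1 le_rfl, h0 1 le_rfl] using hrec 2 1 le_rfl (by norm_num)
  | succ k ih => rw [top_succ_eq_two_mul hz hrec (by omega), ih, nsmul_eq_mul, pow_succ]; ring
end

section
/- For each fixed i, the function n ↦ s_{n,i} agrees for n ≥ i+1 with a polynomial in n of degree i with leading coefficient 1/i!. -/
open Polynomial Finset Nat

/-! For `i ≥ 1` the recurrence says that the forward difference `s_{n+1,i} - s_{n,i}` equals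
`∑_{j=1}^{i} s_{n+1-j,i-j}`; for `n ≥ i + 1` this is, by strong induction on `i`, a polynomial in
`n` of degree `i - 1` with leading coefficient `1/(i-1)!`, since only the term `j = 1` reaches that
degree. Summing a polynomial of degree `d` raises the degree by one and divides the leading
coefficient by `d + 1` (Bernoulli polynomials satisfy `B_{k+1}(x+1) - B_{k+1}(x) = (k+1) x^k`),
which turns `1/(i-1)!` into `1/i!`. -/

namespace Polynomial

theorem natDegree_bernoulli_le (n : ℕ) : (bernoulli n).natDegree ≤ n :=
  natDegree_le_iff_coeff_eq_zero.2 fun i hi => by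
    rw [coeff_bernoulli, if_neg (by exact_mod_cast hi.not_ge)]

theorem exists_eval_add_one_sub_eval_eq (Q : ℚ[X]) {d : ℕ} (hQ : Q.natDegree ≤ d) :
    ∃ P : ℚ[X], P.natDegree ≤ d + 1 ∧ P.coeff (d + 1) = Q.coeff d / (d + 1) ∧
      ∀ x, P.eval (x + 1) - P.eval x = Q.eval x := by
  refine ⟨∑ k ∈ range (d + 1), C (Q.coeff k / (k + 1)) * bernoulli (k + 1), ?_, ?_, fun x => ?_⟩
  · exact natDegree_sum_le_of_forall_le _ _ fun k hk => (natDegree_C_mul_le _ _).trans <|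
      (natDegree_bernoulli_le _).trans (by simpa using mem_range.1 hk)
  · rw [finsetSum_coeff, sum_eq_single d]
    · simp [coeff_bernoulli]
    · intro k hk hkd
      rw [coeff_C_mul, coeff_bernoulli, if_neg (by grind), mul_zero]
    · simp
  · simp only [eval_finsetSum, eval_mul, eval_C, ← sum_sub_distrib, ← mul_sub, add_comm x,
      bernoulli_eval_one_add]
    rw [eval_eq_sum_range' (Nat.lt_succ_of_le hQ)]
    refine sum_congr rfl fun k _ => ?_
    push_cast
    field_simp
    ring

theorem exists_eval_eq_of_sub_eq_eval (f : ℕ → ℚ) (a : ℕ) (Q : ℚ[X]) {d : ℕ}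
    (hQ : Q.natDegree ≤ d) (hf : ∀ n, a ≤ n → f (n + 1) - f n = Q.eval (n : ℚ)) :
    ∃ P : ℚ[X], P.natDegree ≤ d + 1 ∧ P.coeff (d + 1) = Q.coeff d / (d + 1) ∧
      ∀ n, a ≤ n → f n = P.eval (n : ℚ) := by
  obtain ⟨P, hPdeg, hPcoeff, hPdiff⟩ := exists_eval_add_one_sub_eval_eq Q hQ
  refine ⟨P + C (f a - P.eval (a : ℚ)), by rwa [natDegree_add_C], by simp [hPcoeff], ?_⟩
  intro n hn
  induction n, hn using Nat.le_induction with
  | base => simp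
  | succ n hn ih =>
    simp only [eval_add, eval_C, Nat.cast_succ] at ih ⊢
    linarith [hPdiff n, hf n hn]

end Polynomial

theorem exists_column_polynomial_succ (s : ℕ → ℕ → ℚ)
    (hrec : ∀ n i, 1 ≤ i → i < n →
      s n i = s (n - 1) i + ∑ j ∈ Icc 1 i, s (n - j) (i - j))
    (m : ℕ) (p : ℕ → ℚ[X])
    (hp : ∀ k ≤ m, (p k).natDegree ≤ k ∧ (p k).coeff k = 1 / (k ! : ℚ) ∧
      ∀ n, k + 1 ≤ n → s n k = (p k).eval (n : ℚ)) :
    ∃ q : ℚ[X], q.natDegree ≤ m + 1 ∧ q.coeff (m + 1) = 1 / ((m + 1)! : ℚ) ∧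
      ∀ n, m + 1 + 1 ≤ n → s n (m + 1) = q.eval (n : ℚ) := by
  set Q := ∑ j ∈ Icc 1 (m + 1), taylor (1 - j : ℚ) (p (m + 1 - j))
  have hQdeg : Q.natDegree ≤ m := natDegree_sum_le_of_forall_le _ _ fun j hj => by
    rw [natDegree_taylor]
    grind
  have hQcoeff : Q.coeff m = 1 / (m ! : ℚ) := by
    rw [finsetSum_coeff, sum_eq_single 1]
    · simp [(hp m le_rfl).2.1]
    · intro j hj hj1
      have hj := mem_Icc.1 hj
      have := (hp (m + 1 - j) (by omega)).1
      rw [coeff_eq_zero_of_natDegree_lt (by rw [natDegree_taylor]; omega)]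
    · simp
  have hdiff : ∀ n, m + 1 ≤ n → s (n + 1) (m + 1) - s n (m + 1) = Q.eval (n : ℚ) := by
    intro n hn
    rw [hrec (n + 1) (m + 1) (by omega) (by omega), Nat.add_sub_cancel, add_sub_cancel_left,
      eval_finsetSum]
    refine sum_congr rfl fun j hj => ?_
    have hj := mem_Icc.1 hj
    rw [taylor_eval, (hp (m + 1 - j) (by omega)).2.2 (n + 1 - j) (by omega),
      Nat.cast_sub (by omega)]
    push_cast
    rw [add_sub_assoc]
  obtain ⟨q, hqdeg, hqcoeff, hq⟩ :=
    exists_eval_eq_of_sub_eq_eval (fun n => s n (m + 1)) _ Q hQdeg hdiff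
  refine ⟨q, hqdeg, ?_, fun n hn => hq n (by omega)⟩
  rw [hqcoeff, hQcoeff, Nat.factorial_succ]
  push_cast
  field_simp

theorem exists_column_polynomial (s : ℕ → ℕ → ℚ) (h0 : ∀ n, 1 ≤ n → s n 0 = 1)
    (hrec : ∀ n i, 1 ≤ i → i < n →
      s n i = s (n - 1) i + ∑ j ∈ Icc 1 i, s (n - j) (i - j))
    (i : ℕ) :
    ∃ p : ℚ[X], p.natDegree ≤ i ∧ p.coeff i = 1 / (i ! : ℚ) ∧
      ∀ n, i + 1 ≤ n → s n i = p.eval (n : ℚ) := by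
  induction i using Nat.strong_induction_on with
  | _ i ih =>
  cases i with
  | zero => exact ⟨1, by simp, by simp, fun n hn => by simpa using h0 n hn⟩
  | succ m =>
    choose! p hp using ih
    exact exists_column_polynomial_succ s hrec m p fun k hk => hp k (by omega)

theorem simple_braid_coeff_polynomial_general (s : ℕ → ℕ → ℚ)
    (h0 : ∀ n, 1 ≤ n → s n 0 = 1)
    (hrec : ∀ n i, 1 ≤ i → i < n →
      s n i = s (n - 1) i + ∑ j ∈ Finset.Icc 1 i, s (n - j) (i - j)) :
    ∀ i : ℕ, ∃ p : Polynomial ℚ, p.degree = i ∧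
      p.leadingCoeff = 1 / (Nat.factorial i : ℚ) ∧
      ∀ n : ℕ, i + 1 ≤ n → s n i = p.eval (n : ℚ) := by
  intro i
  obtain ⟨p, hdeg, hcoeff, hp⟩ := exists_column_polynomial s h0 hrec i
  have hne : p.coeff i ≠ 0 := by
    rw [hcoeff]
    positivity
  refine ⟨p, degree_eq_of_le_of_coeff_ne_zero (degree_le_of_natDegree_le hdeg) hne, ?_, hp⟩
  rw [leadingCoeff, natDegree_eq_of_le_of_coeff_ne_zero hdeg hne, hcoeff]

/-- For each fixed `i`, the function `n ↦ s_{n,i}` agrees, for `n ≥ i + 1`, with a polynomial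
in `n` of degree `i` whose leading coefficient is `1/i!`. -/
theorem simple_braid_coeff_polynomial (s : ℕ → ℕ → ℚ)
    (h0 : ∀ n, 1 ≤ n → s n 0 = 1)
    (hz : ∀ n i, n ≤ i → s n i = 0)
    (hrec : ∀ n i, 1 ≤ i → i < n →
      s n i = s (n - 1) i + ∑ j ∈ Finset.Icc 1 i, s (n - j) (i - j)) :
    ∀ i : ℕ, ∃ p : Polynomial ℚ, p.degree = i ∧
      p.leadingCoeff = 1 / (Nat.factorial i : ℚ) ∧
      ∀ n : ℕ, i + 1 ≤ n → s n i = p.eval (n : ℚ) :=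
  simple_braid_coeff_polynomial_general s h0 hrec
end

section
/- Define S_n = Σ_{i=0}^{n-1} s_{n,i} (the total number of simple n-braids). Then S_n satisfies S_n = 2S_{n-1} + S_{n-2} + S_{n-3} + ··· + S_2 + S_1 for n ≥ 2, with S_1 = 1. -/
/-!
Sum the recurrence over `1 ≤ i < n`. The terms `s_{n-1,i}` contribute `S_{n-1} - 1`, which the
term `s_{n,0} = 1` compensates. Exchanging the order of summation in the remaining terms
`s_{n-j,i-j}` groups them by their first index `n - j`, giving `S_{n-1} + S_{n-2} + ⋯ + S_1`.
-/

open Finset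

variable {R : Type*} [CommRing R]

def rowSum (s : ℕ → ℕ → R) (n : ℕ) : R := ∑ i ∈ range n, s n i

theorem sum_range_succ_eq_sum_Icc (f : ℕ → R) (n : ℕ) :
    ∑ i ∈ range n, f (i + 1) = ∑ i ∈ Icc 1 n, f i := by
  rw [range_eq_Ico, sum_Ico_add' f 0 n 1, zero_add, Ico_add_one_right_eq_Icc]

theorem sum_range_sum_range_sub_eq_sum_rowSum (s : ℕ → ℕ → R) (n : ℕ) :
    ∑ i ∈ range n, ∑ j ∈ range (i + 1), s (n - j) (i - j) = ∑ j ∈ Icc 1 n, rowSum s j := by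
  rw [sum_range_diag_flip, ← sum_range_succ_eq_sum_Icc, ← sum_range_reflect]
  refine sum_congr rfl fun j hj => ?_
  rw [show n - (n - 1 - j) = j + 1 by have := mem_range.mp hj; omega]
  rfl

theorem rowSum_add_two (s : ℕ → ℕ → R) (m : ℕ)
    (h0 : ∀ n, 1 ≤ n → s n 0 = 1)
    (hz : ∀ n i, n ≤ i → s n i = 0)
    (hrec : ∀ n i, 1 ≤ i → i < n →
      s n i = s (n - 1) i + ∑ j ∈ Icc 1 i, s (n - j) (i - j)) :
    rowSum s (m + 2) = 2 * rowSum s (m + 1) + ∑ j ∈ Icc 1 m, rowSum s j := by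
  have hrec_reindexed : ∀ i ∈ range (m + 1), s (m + 2) (i + 1)
      = s (m + 1) (i + 1) + ∑ j ∈ range (i + 1), s (m + 1 - j) (i - j) := by
    intro i hi
    rw [hrec _ _ le_add_self (by simpa using hi), ← sum_range_succ_eq_sum_Icc]
    refine congrArg₂ (· + ·) rfl (sum_congr rfl fun j _ => ?_)
    rw [show m + 2 - (j + 1) = m + 1 - j by omega, Nat.add_sub_add_right]
  have hdiag := sum_range_sum_range_sub_eq_sum_rowSum s (m + 1)
  rw [sum_Icc_succ_top le_add_self] at hdiag
  have hprev_row : ∑ i ∈ range (m + 1), s (m + 1) (i + 1) = rowSum s (m + 1) - 1 := by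
    rw [rowSum, sum_range_succ, sum_range_succ', hz (m + 1) (m + 1) le_rfl, h0 (m + 1) le_add_self]
    ring
  rw [rowSum, sum_range_succ', sum_congr rfl hrec_reindexed, sum_add_distrib, hdiag, hprev_row,
    h0 (m + 2) le_add_self]
  ring

/-- Let `S_n = Σ_{i=0}^{n-1} s_{n,i}` be the total number of simple `n`-braids. Then
`S_n = 2S_{n-1} + S_{n-2} + ⋯ + S_2 + S_1` for `n ≥ 2`, with `S_1 = 1`. -/
theorem simple_braid_total_recurrence (s : ℕ → ℕ → ℚ)
    (h0 : ∀ n, 1 ≤ n → s n 0 = 1)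
    (hz : ∀ n i, n ≤ i → s n i = 0)
    (hrec : ∀ n i, 1 ≤ i → i < n →
      s n i = s (n - 1) i + ∑ j ∈ Finset.Icc 1 i, s (n - j) (i - j)) :
    (∑ i ∈ Finset.range 1, s 1 i) = 1 ∧
    ∀ n : ℕ, 2 ≤ n →
      (∑ i ∈ Finset.range n, s n i)
        = 2 * (∑ i ∈ Finset.range (n - 1), s (n - 1) i)
          + ∑ j ∈ Finset.Icc 1 (n - 2), ∑ i ∈ Finset.range j, s j i := by
  refine ⟨by simp [h0 1 le_rfl], fun n hn => ?_⟩
  obtain ⟨m, rfl⟩ := Nat.exists_eq_add_of_le' hn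
  exact rowSum_add_two s m h0 hz hrec
end

section
/- If a sequence S_1 = 1, and S_n = 2S_{n-1} + S_{n-2} + ··· + S_1 for n ≥ 2, then S_n = F_{2n-1} for all n ≥ 1, where F is the Fibonacci sequence with F_1 = F_2 = 1. -/
/-!
Shifting the recurrence by one index gives `S (n + 1) = S n + (S 1 + ⋯ + S n)`. By strong
induction every earlier term is an odd-indexed Fibonacci number, and the odd-indexed Fibonacci
numbers `F 1 + F 3 + ⋯ + F (2n - 1)` sum to `F (2n)`, so
`S (n + 1) = F (2n - 1) + F (2n) = F (2n + 1)`.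
-/

open Finset Nat

theorem sum_range_fib_two_mul_add_one (m : ℕ) :
    ∑ j ∈ range m, fib (2 * j + 1) = fib (2 * m) := by
  induction m with
  | zero => simp
  | succ m ih =>
    rw [sum_range_succ, ih, mul_add_one, fib_add_two]

theorem sum_Icc_one_eq_sum_range_succ {M : Type*} [AddCommMonoid M] (f : ℕ → M) (m : ℕ) :
    ∑ j ∈ Icc 1 m, f j = ∑ j ∈ range m, f (j + 1) := by
  rw [range_eq_Ico, sum_Ico_add' f 0 m 1, zero_add, Ico_add_one_right_eq_Icc]

theorem eq_fib_two_mul_add_one_of_rec (T : ℕ → ℕ) (h0 : T 0 = 1)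
    (hrec : ∀ m, T (m + 1) = 2 * T m + ∑ j ∈ range m, T j) (m : ℕ) :
    T m = fib (2 * m + 1) := by
  induction m using Nat.strong_induction_on with
  | _ m ih =>
    rcases m with _ | m
    · simp [h0]
    · have hsum : ∑ j ∈ range m, T j = fib (2 * m) := by
        rw [← sum_range_fib_two_mul_add_one]
        exact sum_congr rfl fun j hj => ih j (by simp at hj; omega)
      calc T (m + 1) = 2 * fib (2 * m + 1) + fib (2 * m) := by
              rw [hrec, ih m (lt_add_one m), hsum]
        _ = fib (2 * (m + 1) + 1) := by
              rw [show 2 * (m + 1) + 1 = 2 * m + 1 + 2 by ring, fib_add_two,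
                show 2 * m + 1 + 1 = 2 * m + 2 by ring, fib_add_two]
              ring

/-- If `S_1 = 1` and `S_n = 2S_{n-1} + S_{n-2} + ⋯ + S_1` for `n ≥ 2`, then `S_n = F_{2n-1}`
for all `n ≥ 1`, where `F` is the Fibonacci sequence with `F_1 = F_2 = 1`. -/
theorem recurrence_gives_odd_fib (S : ℕ → ℕ) (h1 : S 1 = 1)
    (hrec : ∀ n, 2 ≤ n → S n = 2 * S (n - 1) + ∑ j ∈ Finset.Icc 1 (n - 2), S j) :
    ∀ n, 1 ≤ n → S n = Nat.fib (2 * n - 1) := by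
  have hshift := eq_fib_two_mul_add_one_of_rec (fun k => S (k + 1)) h1 fun m => by
    rw [hrec (m + 2) (by omega), ← sum_Icc_one_eq_sum_range_succ]
    rfl
  intro n hn
  obtain ⟨m, rfl⟩ : ∃ m, n = m + 1 := ⟨n - 1, by omega⟩
  rw [hshift m, show 2 * (m + 1) - 1 = 2 * m + 1 by omega]
end

section
/- The number of conjugacy classes of simple n-braids of length i equals P(i + min(i, n-i), min(i, n-i)), the number of partitions of i + min(i,n-i) into exactly min(i,n-i) parts. -/
/-!
A multiset `A` of integers `≥ 2` with `Σ A = i + |A|` has `|A| ≤ i`, and `Σ A ≤ n` amounts to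
`|A| ≤ n - i`; so the condition is `|A| ≤ k := min i (n - i)`. Padding `A` with `k - |A|` ones
gives a partition of `i + k` into exactly `k` parts, and every such partition arises in this way
from its parts `≥ 2`.
-/

/-- `P m k` is the number of partitions of `m` into exactly `k` (positive) parts. -/
def P (m k : ℕ) : ℕ :=
  (Finset.univ.filter fun p : Nat.Partition m => p.parts.card = k).card

namespace Multiset

theorem filter_not_two_le_eq_replicate_one {s : Multiset ℕ} (hs : ∀ a ∈ s, 0 < a) :
    s.filter (fun a => ¬2 ≤ a) = replicate (card (s.filter fun a => ¬2 ≤ a)) 1 :=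
  eq_replicate.mpr ⟨rfl, fun b hb => by
    have := hs b (mem_of_mem_filter hb)
    have := of_mem_filter hb
    omega⟩

theorem filter_two_le_add_replicate_one {s : Multiset ℕ} (hs : ∀ a ∈ s, 0 < a) :
    s.filter (2 ≤ ·) + replicate (card (s.filter fun a => ¬2 ≤ a)) 1 = s := by
  rw [← filter_not_two_le_eq_replicate_one hs, filter_add_not]

theorem card_le_min_sub_iff_sum_le {A : Multiset ℕ} {i n : ℕ} (hi : i ≤ n)
    (h2 : ∀ a ∈ A, 2 ≤ a) (hsum : A.sum = i + card A) :
    card A ≤ min i (n - i) ↔ A.sum ≤ n := by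
  have := card_nsmul_le_sum h2
  rw [smul_eq_mul] at this
  omega

end Multiset

open Multiset in
def Nat.Partition.equivPartsTwoLe (i k : ℕ) :
    {p : (i + k).Partition // card p.parts = k} ≃
      {A : Multiset ℕ // (∀ a ∈ A, 2 ≤ a) ∧ card A ≤ k ∧ A.sum = i + card A} where
  toFun p := ⟨p.1.parts.filter (2 ≤ ·), by
    have hsplit := filter_two_le_add_replicate_one fun _ ha => p.1.parts_pos ha
    have hcard := congrArg card hsplit
    have hsum := congrArg Multiset.sum hsplit
    simp only [card_add, card_replicate, sum_add, sum_replicate, smul_eq_mul, mul_one,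
      p.1.parts_sum, p.2] at hcard hsum
    exact ⟨fun a ha => of_mem_filter ha, by omega, by omega⟩⟩
  invFun A := ⟨⟨A.1 + replicate (k - card A.1) 1,
    fun {a} ha => (mem_add.mp ha).elim (fun h => (A.2.1 a h).trans' one_le_two)
      fun h => (eq_of_mem_replicate h).symm ▸ one_pos,
    by
      rw [sum_add, sum_replicate, smul_eq_mul, mul_one, A.2.2.2]
      have := A.2.2.1
      omega⟩,
    by
      rw [card_add, card_replicate]
      have := A.2.2.1
      omega⟩
  left_inv p := by
    refine Subtype.ext (Nat.Partition.ext ?_)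
    have hsplit := filter_two_le_add_replicate_one fun _ ha => p.1.parts_pos ha
    have hcard := congrArg card hsplit
    simp only [card_add, card_replicate, p.2] at hcard
    change p.1.parts.filter (2 ≤ ·) + replicate (k - card (p.1.parts.filter (2 ≤ ·))) 1 = _
    rwa [show k - card (p.1.parts.filter (2 ≤ ·)) = card (p.1.parts.filter fun a => ¬2 ≤ a) by
      omega]
  right_inv A := by
    refine Subtype.ext ?_
    change (A.1 + replicate (k - card A.1) 1).filter (2 ≤ ·) = A.1
    rw [filter_add, filter_eq_self.mpr A.2.1,
      filter_eq_nil.mpr fun a ha => by rw [eq_of_mem_replicate ha]; omega, add_zero]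

/-- The number of conjugacy classes of simple `n`-braids of length `i` equals
`P(i + min(i, n-i), min(i, n-i))`. Conjugacy classes of simple `n`-braids are in bijection
with multisets `A` of integers `≥ 2` with sum `≤ n`, the length of the corresponding braid
being `(Σ A) - |A| = i`. -/
theorem conjugacy_classes_simple_braids (n i : ℕ) (hi : i < n) :
    {A : Multiset ℕ | (∀ a ∈ A, 2 ≤ a) ∧
        A.sum = i + Multiset.card A ∧ A.sum ≤ n}.ncard
      = P (i + min i (n - i)) (min i (n - i)) := by
  have hcond : ∀ A : Multiset ℕ,
      ((∀ a ∈ A, 2 ≤ a) ∧ A.sum = i + Multiset.card A ∧ A.sum ≤ n) ↔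
        ((∀ a ∈ A, 2 ≤ a) ∧ Multiset.card A ≤ min i (n - i) ∧ A.sum = i + Multiset.card A) :=
    fun _ => ⟨fun ⟨h2, hsum, hn⟩ =>
        ⟨h2, (Multiset.card_le_min_sub_iff_sum_le hi.le h2 hsum).mpr hn, hsum⟩,
      fun ⟨h2, hk, hsum⟩ => ⟨h2, hsum, (Multiset.card_le_min_sub_iff_sum_le hi.le h2 hsum).mp hk⟩⟩
  rw [← Nat.card_coe_set_eq, Set.coe_ofPred,
    Nat.card_congr ((Equiv.subtypeEquivRight hcond).trans (Nat.Partition.equivPartsTwoLe i _).symm),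
    Nat.card_eq_fintype_card, Fintype.card_subtype, P]
end
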